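/- arXiv:2503.20223 — 2 statements merged into one kernel-verified Lean document; each statement's English description precedes it below -/
import Mathlib

section
/- For any vector h ∈ ℂ^N with N ≥ 3, there exist real phases φ_1, ..., φ_N such that ∑_{i=1}^N h_i e^{iφ_i} = 0 if and only if max_{1≤i≤N} |h_i| ≤ (1/2) ∑_{i=1}^N |h_i|. -/
/-!
Necessity is the triangle inequality: in a closed polygon no side is longer than the sum of
the others. For sufficiency let `a m` be the largest weight. Choosing signs greedily, the other
weights have a signed sum of absolute value at most `a m`, while aligned they sum to at least
`a m`. Rotating each of them continuously from aligned to its sign, the intermediate value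
theorem yields a position where their sum has length exactly `a m`, and the last side closes
the polygon.
-/

open Complex Finset

variable {ι : Type*}

theorem two_mul_norm_le_sum_norm_of_sum_eq_zero {E : Type*} [SeminormedAddCommGroup E]
    {s : Finset ι} {v : ι → E} (hv : ∑ j ∈ s, v j = 0) {i : ι} (hi : i ∈ s) :
    2 * ‖v i‖ ≤ ∑ j ∈ s, ‖v j‖ := by
  classical
  have hvi : v i = -∑ j ∈ s.erase i, v j :=
    eq_neg_of_add_eq_zero_left ((add_sum_erase s v hi).trans hv)
  have hle : ‖v i‖ ≤ ∑ j ∈ s.erase i, ‖v j‖ := by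
    rw [hvi, norm_neg]
    exact norm_sum_le _ _
  rw [← add_sum_erase s (‖v ·‖) hi]
  linarith

theorem exists_abs_eq_one_abs_add_mul_le {x a B : ℝ} (hx : |x| ≤ B) (ha : |a| ≤ B) :
    ∃ e : ℝ, |e| = 1 ∧ |x + e * a| ≤ B := by
  rw [abs_le] at hx ha
  rcases le_total 0 x with hx0 | hx0 <;> rcases le_total 0 a with ha0 | ha0
  · exact ⟨-1, by norm_num, abs_le.2 ⟨by linarith, by linarith⟩⟩
  · exact ⟨1, by norm_num, abs_le.2 ⟨by linarith, by linarith⟩⟩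
  · exact ⟨1, by norm_num, abs_le.2 ⟨by linarith, by linarith⟩⟩
  · exact ⟨-1, by norm_num, abs_le.2 ⟨by linarith, by linarith⟩⟩

theorem exists_abs_eq_one_abs_sum_mul_le (s : Finset ι) (a : ι → ℝ) {B : ℝ} (hB : 0 ≤ B)
    (ha : ∀ i ∈ s, |a i| ≤ B) :
    ∃ ε : ι → ℝ, (∀ i, |ε i| = 1) ∧ |∑ i ∈ s, ε i * a i| ≤ B := by
  classical
  induction s using Finset.induction_on with
  | empty => exact ⟨fun _ ↦ 1, by simp, by simpa using hB⟩
  | insert j s hj ih =>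
    obtain ⟨ε, hε, hsum⟩ := ih fun i hi ↦ ha i (mem_insert_of_mem hi)
    obtain ⟨e, he, hle⟩ := exists_abs_eq_one_abs_add_mul_le hsum (ha j (mem_insert_self j s))
    refine ⟨Function.update ε j e, fun i ↦ ?_, ?_⟩
    · rcases eq_or_ne i j with rfl | hij
      · rwa [Function.update_self]
      · rw [Function.update_of_ne hij, hε]
    · have hrest : ∑ i ∈ s, Function.update ε j e i * a i = ∑ i ∈ s, ε i * a i :=
        sum_congr rfl fun i hi ↦ by rw [Function.update_of_ne (ne_of_mem_of_not_mem hi hj)]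
      rwa [sum_insert hj, hrest, Function.update_self, add_comm]

theorem exists_norm_sum_mul_exp_eq (s : Finset ι) (a θ : ι → ℝ) (ha : ∀ i ∈ s, 0 ≤ a i)
    {c : ℝ} (hlo : ‖∑ i ∈ s, (a i : ℂ) * exp (θ i * I)‖ ≤ c) (hhi : c ≤ ∑ i ∈ s, a i) :
    ∃ τ : ℝ, ‖∑ i ∈ s, (a i : ℂ) * exp (↑(τ * θ i) * I)‖ = c := by
  let f : ℝ → ℝ := fun τ ↦ ‖∑ i ∈ s, (a i : ℂ) * exp (↑(τ * θ i) * I)‖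
  have hf : Continuous f := by fun_prop
  have hf0 : f 0 = ∑ i ∈ s, a i := by
    simp only [f, zero_mul, ofReal_zero, exp_zero, mul_one]
    rw [← ofReal_sum, norm_real, Real.norm_of_nonneg (sum_nonneg ha)]
  have hf1 : f 1 = ‖∑ i ∈ s, (a i : ℂ) * exp (θ i * I)‖ := by
    simp only [f, one_mul]
  obtain ⟨τ, -, hτ⟩ := intermediate_value_Icc' zero_le_one hf.continuousOn
    ⟨hf1 ▸ hlo, hf0 ▸ hhi⟩
  exact ⟨τ, hτ⟩

theorem exists_sum_mul_exp_eq_zero (s : Finset ι) (a : ι → ℝ) (ha : ∀ i ∈ s, 0 ≤ a i)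
    (hmax : ∀ i ∈ s, 2 * a i ≤ ∑ j ∈ s, a j) :
    ∃ φ : ι → ℝ, ∑ i ∈ s, (a i : ℂ) * exp (φ i * I) = 0 := by
  classical
  rcases s.eq_empty_or_nonempty with rfl | hs
  · exact ⟨0, sum_empty⟩
  obtain ⟨m, hm, hm_max⟩ := s.exists_max_image a hs
  set t := s.erase m
  have ht : ∀ i ∈ t, 0 ≤ a i ∧ a i ≤ a m := fun i hi ↦
    ⟨ha i (mem_of_mem_erase hi), hm_max i (mem_of_mem_erase hi)⟩
  obtain ⟨ε, hε, hεsum⟩ := exists_abs_eq_one_abs_sum_mul_le t a (ha m hm)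
    fun i hi ↦ (abs_of_nonneg (ht i hi).1).trans_le (ht i hi).2
  have hsigned : ‖∑ i ∈ t, (a i : ℂ) * exp (arg (ε i) * I)‖ = |∑ i ∈ t, ε i * a i| := by
    have hunit (i : ι) : exp (arg (ε i) * I) = ε i := by
      simpa [hε i] using norm_mul_exp_arg_mul_I (ε i : ℂ)
    simp_rw [hunit, ← ofReal_mul, ← ofReal_sum, norm_real, Real.norm_eq_abs, mul_comm]
  have haligned : a m ≤ ∑ i ∈ t, a i := by
    linarith [add_sum_erase s a hm, hmax m hm]
  obtain ⟨τ, hτ⟩ := exists_norm_sum_mul_exp_eq t a (fun i ↦ arg (ε i)) (fun i hi ↦ (ht i hi).1)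
    (hsigned.trans_le hεsum) haligned
  set S := ∑ i ∈ t, (a i : ℂ) * exp (↑(τ * arg (ε i)) * I)
  have hclose : (a m : ℂ) * exp (arg (-S) * I) = -S := by
    rw [← hτ, ← norm_neg S, norm_mul_exp_arg_mul_I]
  refine ⟨Function.update (fun i ↦ τ * arg (ε i)) m (arg (-S)), ?_⟩
  rw [← add_sum_erase s _ hm, Function.update_self, hclose, neg_add_eq_zero]
  exact sum_congr rfl fun i hi ↦ by rw [Function.update_of_ne (ne_of_mem_erase hi)]

theorem mul_exp_sub_arg_mul_I (z : ℂ) (φ : ℝ) :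
    z * exp (↑(φ - arg z) * I) = ‖z‖ * exp (φ * I) := by
  calc z * exp (↑(φ - arg z) * I) = ‖z‖ * exp (arg z * I) * exp (↑(φ - arg z) * I) := by
        rw [norm_mul_exp_arg_mul_I]
    _ = ‖z‖ * exp (φ * I) := by
        rw [mul_assoc, ← exp_add]
        push_cast
        ring_nf

theorem polygon_inequality_general {N : ℕ} (h : Fin N → ℂ) :
    (∃ φ : Fin N → ℝ, ∑ i, h i * Complex.exp (φ i * Complex.I) = 0) ↔
    ∀ i, ‖h i‖ ≤ (1 / 2) * ∑ j, ‖h j‖ := by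
  constructor
  · rintro ⟨φ, hφ⟩ i
    have hle := two_mul_norm_le_sum_norm_of_sum_eq_zero hφ (mem_univ i)
    simp only [norm_mul, norm_exp_ofReal_mul_I, mul_one] at hle
    linarith
  · intro hmax
    obtain ⟨φ, hφ⟩ := exists_sum_mul_exp_eq_zero univ (‖h ·‖) (fun i _ ↦ norm_nonneg _)
      fun i _ ↦ by linarith [hmax i]
    refine ⟨fun i ↦ φ i - arg (h i), ?_⟩
    simpa only [mul_exp_sub_arg_mul_I] using hφ

theorem polygon_inequality {N : ℕ} (hN : 3 ≤ N) (h : Fin N → ℂ) :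
    (∃ φ : Fin N → ℝ, ∑ i, h i * Complex.exp (φ i * Complex.I) = 0) ↔
    ∀ i, ‖h i‖ ≤ (1 / 2) * ∑ j, ‖h j‖ :=
  polygon_inequality_general h
end

section
/- Let h₁, h₂ ∈ ℂ^N, let B₁ ∈ {0,1}^{m×N} be a partition matrix, let φ₁ ∈ ℝ^N satisfy B₁·diag(e^{iφ₁})·h₁ = 0 ∈ ℂ^m, let y = B₁·diag(e^{iφ₁})·h₂ ∈ ℂ^m, and let φ₂ ∈ ℝ^m satisfy ∑_{l=1}^m y_l e^{i(φ₂)_l} = 0. Define w = diag(e^{iφ₁})·B₁ᵀ·(e^{i(φ₂)_1}, ..., e^{i(φ₂)_m})ᵀ ∈ ℂ^N. Then every entry of w has modulus 1, and h₁ᵀ·w = 0 and h₂ᵀ·w = 0. -/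
open Complex Matrix

/-! Both zero-forcing identities are one duality: diagonal matrices are symmetric, so
`hᵀ (D Bᵀ v) = (B D h)ᵀ v`, and the right-hand side vanishes for `h₁` by the choice of `φ₁`
and for `h₂` by the choice of `φ₂`. Constant modulus holds because a partition matrix picks
exactly one phase `e^{i φ₂ (f i)}` for every antenna `i`. -/

namespace Matrix

variable {ι κ R : Type*}

def partitionMatrix [DecidableEq κ] [Zero R] [One R] (f : ι → κ) : Matrix κ ι R :=
  fun l i => if f i = l then 1 else 0

theorem partitionMatrix_transpose_mulVec [Fintype κ] [DecidableEq κ] [NonAssocSemiring R]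
    (f : ι → κ) (v : κ → R) : (partitionMatrix f)ᵀ *ᵥ v = v ∘ f := by
  ext i
  simp [partitionMatrix, mulVec, dotProduct]

theorem dotProduct_diagonal_mulVec_transpose_mulVec [Fintype ι] [Fintype κ] [DecidableEq ι]
    [CommSemiring R]
    (B : Matrix κ ι R) (d h : ι → R) (v : κ → R) :
    h ⬝ᵥ (diagonal d *ᵥ (Bᵀ *ᵥ v)) = (B *ᵥ (diagonal d *ᵥ h)) ⬝ᵥ v := by
  rw [dotProduct_mulVec, dotProduct_mulVec, vecMul_transpose,
    ← vecMul_transpose (diagonal d) h, diagonal_transpose]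

end Matrix

theorem spzf_correctness_K2 {N m : ℕ}
    (h₁ h₂ : Fin N → ℂ) (f : Fin N → Fin m)
    (B : Matrix (Fin m) (Fin N) ℂ)
    (hB : ∀ l i, B l i = if f i = l then 1 else 0)
    (φ₁ : Fin N → ℝ)
    (hzf₁ : B.mulVec
      ((Matrix.diagonal (fun i => Complex.exp (φ₁ i * Complex.I))).mulVec h₁) = 0)
    (y : Fin m → ℂ)
    (hy : y = B.mulVec
      ((Matrix.diagonal (fun i => Complex.exp (φ₁ i * Complex.I))).mulVec h₂))
    (φ₂ : Fin m → ℝ)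
    (hzf₂ : ∑ l : Fin m, y l * Complex.exp (φ₂ l * Complex.I) = 0)
    (w : Fin N → ℂ)
    (hw : w = (Matrix.diagonal (fun i => Complex.exp (φ₁ i * Complex.I))).mulVec
      (B.transpose.mulVec (fun l => Complex.exp (φ₂ l * Complex.I)))) :
    (∀ i, ‖w i‖ = 1) ∧
    (∑ i : Fin N, h₁ i * w i = 0) ∧ (∑ i : Fin N, h₂ i * w i = 0) := by
  have hB' : B = partitionMatrix f := Matrix.ext hB
  refine ⟨fun i => ?_, ?_, ?_⟩
  · rw [hw, mulVec_diagonal, hB', partitionMatrix_transpose_mulVec, Function.comp_apply,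
      norm_mul, norm_exp_ofReal_mul_I, norm_exp_ofReal_mul_I, one_mul]
  · change h₁ ⬝ᵥ w = 0
    rw [hw, dotProduct_diagonal_mulVec_transpose_mulVec, hzf₁, zero_dotProduct]
  · change h₂ ⬝ᵥ w = 0
    rw [hw, dotProduct_diagonal_mulVec_transpose_mulVec, ← hy]
    exact hzf₂
end
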